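/- arXiv:math/0305309 — 5 statements merged into one kernel-verified Lean document; each statement's English description precedes it below -/
import Mathlib

section
/- Let H be a complex Hilbert space, 0<q<1, r ≥ 0, v a bounded isometry on H (v*v = 1), Y a bounded self-adjoint operator on H with Y·v = q²·v·Y, and T a bounded operator on H satisfying T = q²·v·T·v* + (1−q²)·(Y² + r·1). Then for every n ∈ ℕ: T·vⁿ = vⁿ·(q^{2n}·T + (1 − q^{2n})·(q^{2n+2}·Y² + r·1)). -/
theorem stmt_7 {H : Type*} [NormedAddCommGroup H] [InnerProductSpace ℂ H] [CompleteSpace H]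
    (q r : ℝ) (hq : 0 < q) (hq1 : q < 1) (hr : 0 ≤ r)
    (v Y T : H →L[ℂ] H)
    (hv : ContinuousLinearMap.adjoint v * v = 1)
    (hY : IsSelfAdjoint Y)
    (hYv : Y * v = ((q : ℂ) ^ 2) • (v * Y))
    (hT : T = ((q : ℂ) ^ 2) • (v * T * ContinuousLinearMap.adjoint v)
        + (1 - (q : ℂ) ^ 2) • (Y ^ 2 + (r : ℂ) • (1 : H →L[ℂ] H))) :
    ∀ n : ℕ, T * v ^ n = v ^ n * (((q : ℂ) ^ (2 * n)) • T
      + (1 - (q : ℂ) ^ (2 * n)) • (((q : ℂ) ^ (2 * n + 2)) • Y ^ 2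
          + (r : ℂ) • (1 : H →L[ℂ] H))) := by
  have hY2v : Y ^ 2 * v = ((q : ℂ) ^ 4) • (v * Y ^ 2) := by
    have h : Y ^ 2 * v = Y * (Y * v) := by rw [sq, mul_assoc]
    rw [h, hYv, mul_smul_comm, ← mul_assoc, hYv]
    rw [smul_mul_assoc, smul_smul, mul_assoc, ← sq Y]
    congr 1
    ring
  have hY2vn : ∀ n : ℕ, Y ^ 2 * v ^ n = ((q : ℂ) ^ (4 * n)) • (v ^ n * Y ^ 2) := by
    intro n
    induction n with
    | zero => simp
    | succ m ihm =>
      rw [pow_succ' v, ← mul_assoc, hY2v, smul_mul_assoc, mul_assoc, ihm,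
        mul_smul_comm, smul_smul, ← mul_assoc, ← pow_succ']
      ring_nf
  have hTv : T * v = v * (((q : ℂ) ^ 2) • T
      + (1 - (q : ℂ) ^ 2) • (((q : ℂ) ^ 4) • Y ^ 2 + (r : ℂ) • (1 : H →L[ℂ] H))) := by
    conv_lhs => rw [hT]
    rw [add_mul, smul_mul_assoc, smul_mul_assoc, mul_assoc, mul_assoc, hv, mul_one,
      add_mul, hY2v, smul_mul_assoc, one_mul]
    simp only [mul_add, mul_smul_comm, mul_one, smul_add, smul_smul]
  intro n
  induction n with
  | zero => simp
  | succ n ih =>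
    have hstep : T * v ^ (n + 1) = (T * v) * v ^ n := by
      rw [pow_succ', mul_assoc]
    rw [hstep, hTv, mul_assoc]
    simp only [mul_add, add_mul, smul_mul_assoc, mul_smul_comm, one_mul, mul_one,
      ih, hY2vn n, smul_add, smul_smul]
    simp only [← mul_assoc, ← pow_succ']
    match_scalars <;> ring
end

section
/- Let H be a complex Hilbert space, 0<q<1 and r ≥ 0. Suppose v is a unitary operator on H, Y is a bounded self-adjoint operator on H with trivial kernel satisfying Y·v = q²·v·Y, and T is a bounded nonnegative self-adjoint operator satisfying T = q²·v·T·v* + (1−q²)·(Y² + r·1). Then H = {0}. -/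
/-!
Write `w = v⋆`, `f ξ = re ⟪T ξ, ξ⟫ ≥ 0` and `g ξ = ‖Y ξ‖²`. Taking adjoints in `Y v = q² v Y` gives
`w Y = q² Y w`, and `w` is an isometry, so `g ξ = q⁴ g (w ξ)`; the equation for `T` gives
`f ξ ≥ q² f (w ξ) + (1 - q²) g ξ`. Iterating, `(1 - q²) g ξ ≤ q²ⁿ f ξ` for every `n`, so `Y ξ = 0`
and hence `ξ = 0`.
-/

open ContinuousLinearMap Filter RCLike

open scoped InnerProductSpace

section Descent

variable {X : Type*} (w : X → X) {f g : X → ℝ} {s c : ℝ}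

theorem mul_le_pow_mul_of_descent (hs : 0 ≤ s) (hc : 0 ≤ c) (hf : ∀ x, 0 ≤ f x)
    (hg : ∀ x, 0 ≤ g x) (hfw : ∀ x, s * f (w x) + c * g x ≤ f x)
    (hgw : ∀ x, g x = s ^ 2 * g (w x)) (n : ℕ) (x : X) :
    c * g x ≤ s ^ n * f x := by
  induction n generalizing x with
  | zero => nlinarith [hfw x, mul_nonneg hs (hf (w x))]
  | succ n ih =>
    have hsf : s * f (w x) ≤ f x := by nlinarith [hfw x, mul_nonneg hc (hg x)]
    calc c * g x = s ^ 2 * (c * g (w x)) := by rw [hgw x]; ring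
      _ ≤ s ^ 2 * (s ^ n * f (w x)) := mul_le_mul_of_nonneg_left (ih (w x)) (sq_nonneg s)
      _ = s ^ (n + 1) * (s * f (w x)) := by ring
      _ ≤ s ^ (n + 1) * f x := by gcongr

theorem eq_zero_of_descent (hs : 0 ≤ s) (hs1 : s < 1) (hc : 0 < c) (hf : ∀ x, 0 ≤ f x)
    (hg : ∀ x, 0 ≤ g x) (hfw : ∀ x, s * f (w x) + c * g x ≤ f x)
    (hgw : ∀ x, g x = s ^ 2 * g (w x)) (x : X) :
    g x = 0 := by
  have hlim : Tendsto (fun n : ℕ => s ^ n * f x) atTop (nhds 0) := by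
    simpa using (tendsto_pow_atTop_nhds_zero_of_lt_one hs hs1).mul_const (f x)
  have hcg : c * g x ≤ 0 :=
    ge_of_tendsto' hlim (mul_le_pow_mul_of_descent w hs hc.le hf hg hfw hgw · x)
  exact le_antisymm (nonpos_of_mul_nonpos_right hcg hc) (hg x)

end Descent

section Operators

variable {𝕜 E : Type*} [RCLike 𝕜] [NormedAddCommGroup E] [InnerProductSpace 𝕜 E]

theorem norm_apply_eq_of_mul_eq_smul {w Y : E →L[𝕜] E} (hw : ∀ x, ‖w x‖ = ‖x‖) {a : 𝕜}
    (h : w * Y = a • (Y * w)) (x : E) : ‖Y x‖ = ‖a‖ * ‖Y (w x)‖ := by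
  rw [← hw, ← mul_apply_eq_comp, h, smul_apply, norm_smul, mul_apply_eq_comp]

variable [CompleteSpace E]

theorem adjoint_mul_eq_smul_of_mul_eq_smul {Y v : E →L[𝕜] E} (hY : IsSelfAdjoint Y) {a : ℝ}
    (h : Y * v = (a : 𝕜) • (v * Y)) : adjoint v * Y = (a : 𝕜) • (Y * adjoint v) := by
  have := congrArg star h
  rwa [star_mul, star_smul, star_mul, hY.star_eq, RCLike.star_def, RCLike.conj_ofReal,
    star_eq_adjoint] at this

theorem re_inner_self_eq_of_eq_smul_conj_add {T v Y : E →L[𝕜] E} (hY : IsSelfAdjoint Y)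
    {a b r : ℝ} (hT : T = (a : 𝕜) • (v * T * adjoint v) + (b : 𝕜) • (Y ^ 2 + (r : 𝕜) • 1))
    (ξ : E) :
    re ⟪T ξ, ξ⟫_𝕜 = a * re ⟪T (adjoint v ξ), adjoint v ξ⟫_𝕜 + b * (‖Y ξ‖ ^ 2 + r * ‖ξ‖ ^ 2) := by
  have hconj : ⟪(v * T * adjoint v) ξ, ξ⟫_𝕜 = ⟪T (adjoint v ξ), adjoint v ξ⟫_𝕜 :=
    (adjoint_inner_right v _ ξ).symm
  have hsq : re ⟪(Y ^ 2) ξ, ξ⟫_𝕜 = ‖Y ξ‖ ^ 2 := by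
    rw [apply_norm_sq_eq_inner_adjoint_left, hY.adjoint_eq, pow_two]; rfl
  conv_lhs => rw [hT]
  simp only [add_apply, smul_apply, one_apply_eq_self, inner_add_left, inner_smul_left, conj_ofReal,
    map_add, re_ofReal_mul, hconj, hsq, inner_self_eq_norm_sq]

end Operators

theorem stmt_8_general {H : Type*} [NormedAddCommGroup H] [InnerProductSpace ℂ H] [CompleteSpace H]
    (q r : ℝ) (hq : 0 < q) (hq1 : q < 1) (hr : 0 ≤ r)
    (v Y T : H →L[ℂ] H)
    (hv2 : v * ContinuousLinearMap.adjoint v = 1)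
    (hY : IsSelfAdjoint Y)
    (hYker : ∀ ξ : H, Y ξ = 0 → ξ = 0)
    (hYv : Y * v = ((q : ℂ) ^ 2) • (v * Y))
    (hTpos : T.IsPositive)
    (hT : T = ((q : ℂ) ^ 2) • (v * T * ContinuousLinearMap.adjoint v)
        + (1 - (q : ℂ) ^ 2) • (Y ^ 2 + (r : ℂ) • (1 : H →L[ℂ] H))) :
    ∀ ξ : H, ξ = 0 := by
  rw [← Complex.ofReal_pow] at hYv hT
  rw [← Complex.ofReal_one, ← Complex.ofReal_sub] at hT
  have hs1 : q ^ 2 < 1 := by nlinarith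
  have hw : ∀ x, ‖adjoint v x‖ = ‖x‖ :=
    (norm_map_iff_adjoint_comp_self _).mpr (by rw [adjoint_adjoint]; exact hv2)
  have hwY := adjoint_mul_eq_smul_of_mul_eq_smul (a := q ^ 2) hY hYv
  have hgw (ξ : H) : ‖Y ξ‖ ^ 2 = (q ^ 2) ^ 2 * ‖Y (adjoint v ξ)‖ ^ 2 := by
    rw [norm_apply_eq_of_mul_eq_smul hw hwY, RCLike.norm_ofReal, abs_of_nonneg (by positivity)]
    ring
  have hfw (ξ : H) : q ^ 2 * re ⟪T (adjoint v ξ), adjoint v ξ⟫_ℂ + (1 - q ^ 2) * ‖Y ξ‖ ^ 2 ≤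
      re ⟪T ξ, ξ⟫_ℂ := by
    rw [re_inner_self_eq_of_eq_smul_conj_add (a := q ^ 2) (b := 1 - q ^ 2) hY hT ξ]
    nlinarith [mul_nonneg (sub_nonneg.2 hs1.le) (mul_nonneg hr (sq_nonneg ‖ξ‖))]
  intro ξ
  refine hYker ξ (norm_eq_zero.1 (pow_eq_zero_iff two_ne_zero |>.1 ?_))
  exact eq_zero_of_descent (adjoint v) (sq_nonneg q) hs1 (sub_pos.2 hs1)
    hTpos.re_inner_nonneg_left (fun _ => sq_nonneg _) hfw hgw ξ

theorem stmt_8 {H : Type*} [NormedAddCommGroup H] [InnerProductSpace ℂ H] [CompleteSpace H]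
    (q r : ℝ) (hq : 0 < q) (hq1 : q < 1) (hr : 0 ≤ r)
    (v Y T : H →L[ℂ] H)
    (hv1 : ContinuousLinearMap.adjoint v * v = 1)
    (hv2 : v * ContinuousLinearMap.adjoint v = 1)
    (hY : IsSelfAdjoint Y)
    (hYker : ∀ ξ : H, Y ξ = 0 → ξ = 0)
    (hYv : Y * v = ((q : ℂ) ^ 2) • (v * Y))
    (hTpos : T.IsPositive)
    (hT : T = ((q : ℂ) ^ 2) • (v * T * ContinuousLinearMap.adjoint v)
        + (1 - (q : ℂ) ^ 2) • (Y ^ 2 + (r : ℂ) • (1 : H →L[ℂ] H))) :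
    ∀ ξ : H, ξ = 0 :=
  stmt_8_general q r hq hq1 hr v Y T hv2 hY hYker hYv hTpos hT
end

section
/- Let v be a bounded isometry on a complex Hilbert space H and set Hᵤ := ⋂_{n≥0} vⁿ(H) (the intersection of the ranges of all powers of v). Then v(Hᵤ) = Hᵤ, v*(Hᵤ) ⊆ Hᵤ, and the restriction of v to Hᵤ is a unitary operator on Hᵤ (a surjective isometry of Hᵤ onto itself). -/
/-!
An isometry `v` has the left inverse `v*`. For any map `f` with a left inverse `g`, the set
`⋂ n, range f^[n]` is carried into itself by both `f` and `g` (if `x = f^[n+1] y` then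
`g x = f^[n] y`), and `f` maps it onto itself because each of its points `x` equals `f (g x)`.
Injectivity of `f` then makes `f` a bijection of that set.
-/

open Set

namespace Function

variable {α : Type*} {f g : α → α}

/-- For an isometry `v` this is the space `Hᵤ` of the unitary part in the Wold decomposition. -/
def eventualRange (f : α → α) : Set α := ⋂ n, range f^[n]

theorem mem_eventualRange {x : α} : x ∈ eventualRange f ↔ ∀ n, x ∈ range f^[n] :=
  mem_iInter

theorem mapsTo_eventualRange (f : α → α) : MapsTo f (eventualRange f) (eventualRange f) := by
  intro x hx
  refine mem_eventualRange.2 fun n => ?_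
  obtain ⟨y, rfl⟩ := mem_eventualRange.1 hx n
  exact ⟨f y, by rw [← iterate_succ_apply, iterate_succ_apply']⟩

theorem LeftInverse.mapsTo_eventualRange (h : LeftInverse g f) :
    MapsTo g (eventualRange f) (eventualRange f) := by
  intro x hx
  refine mem_eventualRange.2 fun n => ?_
  obtain ⟨y, rfl⟩ := mem_eventualRange.1 hx (n + 1)
  exact ⟨y, by rw [iterate_succ_apply', h]⟩

theorem LeftInverse.image_eventualRange (h : LeftInverse g f) :
    f '' eventualRange f = eventualRange f := by
  refine (Function.mapsTo_eventualRange f).image_subset.antisymm fun x hx => ?_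
  obtain ⟨y, rfl⟩ := mem_eventualRange.1 hx 1
  exact ⟨g (f y), h.mapsTo_eventualRange hx, by rw [h, iterate_one]⟩

theorem LeftInverse.bijOn_eventualRange (h : LeftInverse g f) :
    BijOn f (eventualRange f) (eventualRange f) :=
  ⟨Function.mapsTo_eventualRange f, h.injective.injOn, h.image_eventualRange.superset⟩

end Function

open Function

theorem stmt_9 {H : Type*} [NormedAddCommGroup H] [InnerProductSpace ℂ H] [CompleteSpace H]
    (v : H →L[ℂ] H) (hv : ContinuousLinearMap.adjoint v * v = 1)
    (Hu : Set H) (hHu : Hu = ⋂ n : ℕ, Set.range (v ^ n : H →L[ℂ] H)) :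
    v '' Hu = Hu ∧ (ContinuousLinearMap.adjoint v) '' Hu ⊆ Hu ∧
      (∀ x ∈ Hu, ‖v x‖ = ‖x‖) ∧ Set.BijOn v Hu Hu := by
  have hnorm : ∀ x, ‖v x‖ = ‖x‖ := v.norm_map_iff_adjoint_comp_self.mpr hv
  have hinv : LeftInverse (ContinuousLinearMap.adjoint v) v :=
    fun x => ContinuousLinearMap.ext_iff.1 hv x
  have hHu' : Hu = eventualRange v := by
    simp only [hHu, eventualRange, FunLike.coe_pow_eq_iterate]
  subst hHu'
  exact ⟨hinv.image_eventualRange, hinv.mapsTo_eventualRange.image_subset,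
    fun x _ => hnorm x, hinv.bijOn_eventualRange⟩
end

section
/- Let R be a unital ℂ-algebra, q ∈ ℂ nonzero, and a,b,c,d ∈ R satisfying ab = q·ba, ac = q·ca, bc = cb, bd = q·db, cd = q·dc, ad = 1 + q·bc, da = 1 + q⁻¹·bc. For s ∈ ℂ let ξ(s) := −s·ab + (s²−1)·q·bc + s·q²·dc. Then (a − q·s·c)·ξ(q·s) = q²·ξ(s)·(a − q·s·c) and (d + q⁻¹·s·b)·ξ(q⁻¹·s) = q⁻²·ξ(s)·(d + q⁻¹·s·b). -/
set_option maxHeartbeats 4000000 in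
theorem stmt_14 {R : Type*} [Ring R] [Algebra ℂ R] (q : ℂ) (hq : q ≠ 0)
    (a b c d : R)
    (hab : a * b = q • (b * a)) (hac : a * c = q • (c * a)) (hbc : b * c = c * b)
    (hbd : b * d = q • (d * b)) (hcd : c * d = q • (d * c))
    (had : a * d = 1 + q • (b * c)) (hda : d * a = 1 + q⁻¹ • (b * c))
    (s : ℂ) (ξ : ℂ → R)
    (hξ : ∀ t : ℂ, ξ t = -(t • (a * b)) + ((t ^ 2 - 1) * q) • (b * c)
        + (t * q ^ 2) • (d * c)) :
    (a - (q * s) • c) * ξ (q * s) = (q ^ 2) • (ξ s * (a - (q * s) • c)) ∧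
    (d + (q⁻¹ * s) • b) * ξ (q⁻¹ * s) = ((q ^ 2)⁻¹) • (ξ s * (d + (q⁻¹ * s) • b)) := by
  have hca : c * a = q⁻¹ • (a * c) := by
    rw [hac, smul_smul, inv_mul_cancel₀ hq, one_smul]
  -- part 1 monomial lemmas
  have h1 : a * (a * b) = (q * q) • (b * (a * a)) := by
    rw [hab, mul_smul_comm, ← mul_assoc, hab, smul_mul_assoc, mul_assoc, smul_smul]
  have h2 : a * (b * c) = (q * q) • (b * (c * a)) := by
    rw [← mul_assoc, hab, smul_mul_assoc, mul_assoc, hac, mul_smul_comm, smul_smul]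
  have h3 : a * (d * c) = c + q • (b * (c * c)) := by
    rw [← mul_assoc, had, add_mul, one_mul, smul_mul_assoc, mul_assoc]
  have h4 : c * (a * b) = (q⁻¹ * (q * q)) • (b * (c * a)) := by
    rw [← mul_assoc, hca, smul_mul_assoc, mul_assoc, ← hbc, h2, smul_smul, ← hca]
  have h5 : c * (b * c) = b * (c * c) := by
    rw [← mul_assoc, ← hbc, mul_assoc]
  have h6 : c * (d * c) = q • (d * (c * c)) := by
    rw [← mul_assoc, hcd, smul_mul_assoc, mul_assoc]
  have h7 : a * b * a = q • (b * (a * a)) := by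
    rw [hab, smul_mul_assoc, mul_assoc]
  have h8 : a * b * c = (q * q) • (b * (c * a)) := by
    rw [hab, smul_mul_assoc, mul_assoc, hac, mul_smul_comm, smul_smul]
  have h9 : b * c * a = b * (c * a) := mul_assoc _ _ _
  have h10 : b * c * c = b * (c * c) := mul_assoc _ _ _
  have h11 : d * c * a = q⁻¹ • c + (q⁻¹ * q⁻¹) • (b * (c * c)) := by
    rw [mul_assoc, hca, mul_smul_comm, ← mul_assoc, hda, add_mul, one_mul,
      smul_mul_assoc, mul_assoc, smul_add, smul_smul]
  have h12 : d * c * c = d * (c * c) := mul_assoc _ _ _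
  -- part 2 monomial lemmas
  have g1 : d * (a * b) = b + q⁻¹ • (b * (b * c)) := by
    rw [← mul_assoc, hda, add_mul, one_mul, smul_mul_assoc, mul_assoc, ← hbc]
  have g5 : b * (a * b) = q • (b * (b * a)) := by
    rw [hab, mul_smul_comm, ← mul_assoc]
  have g6 : b * (d * c) = q • (d * (b * c)) := by
    rw [← mul_assoc, hbd, smul_mul_assoc, mul_assoc]
  have g7 : a * b * d = q • b + (q * q) • (b * (b * c)) := by
    rw [mul_assoc, hbd, mul_smul_comm, ← mul_assoc, had, add_mul, one_mul,
      smul_mul_assoc, mul_assoc, ← hbc, smul_add, smul_smul]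
  have g8 : b * c * d = (q * q) • (d * (b * c)) := by
    rw [mul_assoc, hcd, mul_smul_comm, g6, smul_smul]
  have g9 : d * c * d = q • (d * (d * c)) := by
    rw [mul_assoc, hcd, mul_smul_comm]
  have g10 : a * b * b = (q * q) • (b * (b * a)) := by
    rw [hab, smul_mul_assoc, mul_assoc, g5, smul_smul]
  have g11 : b * c * b = b * (b * c) := by
    rw [mul_assoc, ← hbc]
  have g12 : d * c * b = d * (b * c) := by
    rw [mul_assoc, ← hbc]
  constructor
  · rw [hξ, hξ]
    simp only [mul_add, add_mul, mul_sub, sub_mul, mul_neg, neg_mul,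
      mul_smul_comm, smul_mul_assoc, smul_smul, smul_add, smul_sub, smul_neg]
    rw [h1, h2, h3, h4, h5, h6, h7, h8, h9, h10, h11, h12]
    simp only [smul_add, smul_smul]
    match_scalars
    all_goals try field_simp
    all_goals try rw [eq_div_iff (by simp [hq, pow_ne_zero, mul_ne_zero])]
    all_goals ring1
  · rw [hξ, hξ]
    simp only [mul_add, add_mul, mul_sub, sub_mul, mul_neg, neg_mul,
      mul_smul_comm, smul_mul_assoc, smul_smul, smul_add, smul_sub, smul_neg]
    rw [g1, g5, g6, g7, g8, g9, g10, g11, g12]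
    simp only [smul_add, smul_smul]
    match_scalars
    all_goals try field_simp
    all_goals try rw [eq_div_iff (by simp [hq, pow_ne_zero, mul_ne_zero])]
    all_goals ring1
end

section
/- Let 0<q<1, r ≥ 0, ε ∈ {+,−}, λ_ε = 1/2 + ε·√(r+1/4), and c(n) := (r + λ_ε q^{2n} − λ_ε² q^{4n})^{1/2} for n ∈ ℕ (these are nonnegative reals). On ℓ²(ℕ) with orthonormal basis (eₙ)_{n≥0}, define bounded operators A eₙ = λ_ε q^{2n} eₙ and B eₙ = c(n) e_{n−1} (with e_{−1} := 0). Then: B* eₙ = c(n+1) e_{n+1}, A·B = q⁻²·B·A, B*·B = A − A² + r·1, and B·B* = q²·A − q⁴·A² + r·1. -/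
/-! Everything is checked on the basis `eₙ`: `A` is diagonal and `B` is a backward weighted shift,
whose adjoint is the forward shift with conjugated weights. Each relation therefore reduces to a
scalar identity between the weights; at `n = 0` it is `λ² - λ = r`, i.e. that `λ` is a root of
`t² - t - r`. -/

open ContinuousLinearMap

section WeightedShift

variable {𝕜 : Type*} [RCLike 𝕜] {A B D : lp (fun _ : ℕ => 𝕜) 2 →L[𝕜] lp (fun _ : ℕ => 𝕜) 2}
  {a c d : ℕ → 𝕜}

local notation "e" n:max => lp.single 2 n (1 : 𝕜)

theorem lp_apply_eq_inner_single (v : lp (fun _ : ℕ => 𝕜) 2) (m : ℕ) :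
    v m = inner 𝕜 (e m) v := by
  simp [lp.inner_single_left]

theorem adjoint_apply_single_of_weightedShift (hB0 : B (e 0) = 0)
    (hB : ∀ n, B (e (n + 1)) = c n • e n) (n : ℕ) :
    adjoint B (e n) = starRingEnd 𝕜 (c n) • e (n + 1) := by
  ext m
  rw [lp_apply_eq_inner_single, adjoint_inner_right]
  rcases m with _ | m
  · simp [hB0]
  · rw [hB, inner_smul_left, lp.inner_single_left]
    rcases eq_or_ne m n with rfl | hmn
    · simp
    · simp [lp.single_apply, hmn]

theorem diag_mul_weightedShift_eq_smul (hA : ∀ n, A (e n) = a n • e n) (hB0 : B (e 0) = 0)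
    (hB : ∀ n, B (e (n + 1)) = c n • e n) (s : 𝕜) (has : ∀ n, a n = s * a (n + 1)) :
    A * B = s • (B * A) := by
  refine lp.ext_continuousLinearMap ENNReal.ofNat_ne_top fun n => ext_ring ?_
  rcases n with _ | n
  · simp [hB0, hA]
  · simp [hB, hA, smul_smul, has n]
    ring_nf

theorem adjoint_mul_weightedShift_eq_diag (hB0 : B (e 0) = 0) (hB : ∀ n, B (e (n + 1)) = c n • e n)
    (hD : ∀ n, D (e n) = d n • e n) (hd0 : d 0 = 0)
    (hd : ∀ n, d (n + 1) = starRingEnd 𝕜 (c n) * c n) :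
    adjoint B * B = D := by
  refine lp.ext_continuousLinearMap ENNReal.ofNat_ne_top fun n => ext_ring ?_
  rcases n with _ | n
  · simp [hB0, hD, hd0]
  · simp [hB, adjoint_apply_single_of_weightedShift hB0 hB, hD, hd, smul_smul, mul_comm]

theorem weightedShift_mul_adjoint_eq_diag (hB0 : B (e 0) = 0) (hB : ∀ n, B (e (n + 1)) = c n • e n)
    (hD : ∀ n, D (e n) = d n • e n) (hd : ∀ n, d n = starRingEnd 𝕜 (c n) * c n) :
    B * adjoint B = D := by
  refine lp.ext_continuousLinearMap ENNReal.ofNat_ne_top fun n => ext_ring ?_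
  simp [hB, adjoint_apply_single_of_weightedShift hB0 hB, hD, hd, smul_smul]

theorem quadratic_apply_single_of_diag (hA : ∀ n, A (e n) = a n • e n) (s t u : 𝕜) (n : ℕ) :
    (s • A - t • A ^ 2 + u • 1 : _ →L[𝕜] _) (e n) = (s * a n - t * a n ^ 2 + u) • e n := by
  simp [hA, pow_two, smul_smul, sub_smul, add_smul]

end WeightedShift

theorem sq_sub_self_of_eq_half_add_or_sub_sqrt {l r : ℝ} (hr : 0 ≤ r + 1 / 4)
    (hl : l = 1 / 2 + Real.sqrt (r + 1 / 4) ∨ l = 1 / 2 - Real.sqrt (r + 1 / 4)) :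
    l ^ 2 - l = r := by
  rcases hl with rfl | rfl <;> nlinarith [Real.sq_sqrt hr]

theorem stmt_19_general (q r : ℝ) (hq : 0 < q) (hr : 0 ≤ r)
    (l : ℝ) (hl : l = 1/2 + Real.sqrt (r + 1/4) ∨ l = 1/2 - Real.sqrt (r + 1/4))
    (hc : ∀ n : ℕ, 0 ≤ r + l * q ^ (2 * n) - (l * q ^ (2 * n)) ^ 2)
    (A B : lp (fun _ : ℕ => ℂ) 2 →L[ℂ] lp (fun _ : ℕ => ℂ) 2)
    (hA : ∀ n : ℕ, A (lp.single 2 n 1) = ((l * q ^ (2 * n) : ℝ) : ℂ) • lp.single 2 n 1)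
    (hB0 : B (lp.single 2 0 1) = 0)
    (hB : ∀ n : ℕ, B (lp.single 2 (n + 1) 1)
        = ((Real.sqrt (r + l * q ^ (2 * (n + 1)) - (l * q ^ (2 * (n + 1))) ^ 2) : ℝ) : ℂ)
            • lp.single 2 n 1) :
    (∀ n : ℕ, ContinuousLinearMap.adjoint B (lp.single 2 n 1)
        = ((Real.sqrt (r + l * q ^ (2 * (n + 1)) - (l * q ^ (2 * (n + 1))) ^ 2) : ℝ) : ℂ)
            • lp.single 2 (n + 1) 1) ∧
    A * B = (((q : ℝ) ^ 2)⁻¹ : ℂ) • (B * A) ∧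
    ContinuousLinearMap.adjoint B * B = A - A ^ 2 + (r : ℂ) • 1 ∧
    B * ContinuousLinearMap.adjoint B
      = ((q : ℂ) ^ 2) • A - ((q : ℂ) ^ 4) • A ^ 2 + (r : ℂ) • 1 := by
  have hl2 := sq_sub_self_of_eq_half_add_or_sub_sqrt (by linarith) hl
  refine ⟨fun n => by simpa using adjoint_apply_single_of_weightedShift hB0 hB n,
    diag_mul_weightedShift_eq_smul hA hB0 hB _ fun n => ?_,
    adjoint_mul_weightedShift_eq_diag hB0 hB 
      (fun n => by simpa using quadratic_apply_single_of_diag hA 1 1 r n) ?_ fun n => ?_,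
    weightedShift_mul_adjoint_eq_diag hB0 hB (quadratic_apply_single_of_diag hA _ _ r) fun n => ?_⟩
  · norm_cast
    field_simp
    ring
  · norm_cast
    linear_combination -hl2
  · rw [Complex.conj_ofReal]
    norm_cast
    linear_combination -Real.mul_self_sqrt (hc (n + 1))
  · rw [Complex.conj_ofReal]
    norm_cast
    linear_combination -Real.mul_self_sqrt (hc (n + 1))

theorem stmt_19 (q r : ℝ) (hq : 0 < q) (hq1 : q < 1) (hr : 0 ≤ r)
    (l : ℝ) (hl : l = 1/2 + Real.sqrt (r + 1/4) ∨ l = 1/2 - Real.sqrt (r + 1/4))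
    (hc : ∀ n : ℕ, 0 ≤ r + l * q ^ (2 * n) - (l * q ^ (2 * n)) ^ 2)
    (A B : lp (fun _ : ℕ => ℂ) 2 →L[ℂ] lp (fun _ : ℕ => ℂ) 2)
    (hA : ∀ n : ℕ, A (lp.single 2 n 1) = ((l * q ^ (2 * n) : ℝ) : ℂ) • lp.single 2 n 1)
    (hB0 : B (lp.single 2 0 1) = 0)
    (hB : ∀ n : ℕ, B (lp.single 2 (n + 1) 1)
        = ((Real.sqrt (r + l * q ^ (2 * (n + 1)) - (l * q ^ (2 * (n + 1))) ^ 2) : ℝ) : ℂ)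
            • lp.single 2 n 1) :
    (∀ n : ℕ, ContinuousLinearMap.adjoint B (lp.single 2 n 1)
        = ((Real.sqrt (r + l * q ^ (2 * (n + 1)) - (l * q ^ (2 * (n + 1))) ^ 2) : ℝ) : ℂ)
            • lp.single 2 (n + 1) 1) ∧
    A * B = (((q : ℝ) ^ 2)⁻¹ : ℂ) • (B * A) ∧
    ContinuousLinearMap.adjoint B * B = A - A ^ 2 + (r : ℂ) • 1 ∧
    B * ContinuousLinearMap.adjoint B
      = ((q : ℂ) ^ 2) • A - ((q : ℂ) ^ 4) • A ^ 2 + (r : ℂ) • 1 :=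
  stmt_19_general q r hq hr l hl hc A B hA hB0 hB
end
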